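/- arXiv:2509.17922 — 6 statements merged into one kernel-verified Lean document; each statement's English description precedes it below -/
import Mathlib

section
/- Let $a_1, a_0, b_1, b_0$ be objects in an additive category such that $a_1 \oplus a_0 \cong b_1 \oplus b_0$, $\mathrm{Hom}(a_1, b_0) = 0$, and $\mathrm{Hom}(b_1, a_0) = 0$. Then $a_1 \cong b_1$ and $a_0 \cong b_0$. -/
open CategoryTheory Limits

private lemma aux_isIso {C : Type*} [Category C] [Preadditive C] [HasBinaryBiproducts C]
    {X₁ X₂ Y₁ Y₂ : C} (e : X₁ ⊞ X₂ ≅ Y₁ ⊞ Y₂)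
    (hz1 : biprod.inl ≫ e.hom ≫ biprod.snd ≫ biprod.inr ≫ e.inv ≫ biprod.fst = 0)
    (hz2 : biprod.inl ≫ e.inv ≫ biprod.snd ≫ biprod.inr ≫ e.hom ≫ biprod.fst = 0) :
    IsIso (biprod.inl ≫ e.hom ≫ biprod.fst) := by
  have t1 : (biprod.fst : Y₁ ⊞ Y₂ ⟶ _) ≫ biprod.inl = 𝟙 _ - biprod.snd ≫ biprod.inr := by
    rw [eq_sub_iff_add_eq, biprod.total]
  have t2 : (biprod.fst : X₁ ⊞ X₂ ⟶ _) ≫ biprod.inl = 𝟙 _ - biprod.snd ≫ biprod.inr := by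
    rw [eq_sub_iff_add_eq, biprod.total]
  refine ⟨biprod.inl ≫ e.inv ≫ biprod.fst, ?_, ?_⟩
  · calc (biprod.inl ≫ e.hom ≫ biprod.fst) ≫ biprod.inl ≫ e.inv ≫ biprod.fst
        = biprod.inl ≫ e.hom ≫ (biprod.fst ≫ biprod.inl) ≫ e.inv ≫ biprod.fst := by
          simp only [Category.assoc]
      _ = 𝟙 X₁ := by
          rw [t1]
          simp only [Preadditive.sub_comp, Preadditive.comp_sub, Category.id_comp,
            Category.assoc, hz1, sub_zero]
          simp
  · calc (biprod.inl ≫ e.inv ≫ biprod.fst) ≫ biprod.inl ≫ e.hom ≫ biprod.fst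
        = biprod.inl ≫ e.inv ≫ (biprod.fst ≫ biprod.inl) ≫ e.hom ≫ biprod.fst := by
          simp only [Category.assoc]
      _ = 𝟙 Y₁ := by
          rw [t2]
          simp only [Preadditive.sub_comp, Preadditive.comp_sub, Category.id_comp,
            Category.assoc, hz2, sub_zero]
          simp

theorem stmt_0 {C : Type*} [Category C] [Preadditive C] [HasBinaryBiproducts C]
    (a₁ a₀ b₁ b₀ : C)
    (iso : a₁ ⊞ a₀ ≅ b₁ ⊞ b₀)
    (h₁ : ∀ f : a₁ ⟶ b₀, f = 0)
    (h₂ : ∀ f : b₁ ⟶ a₀, f = 0) :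
    Nonempty (a₁ ≅ b₁) ∧ Nonempty (a₀ ≅ b₀) := by
  have hiso : IsIso (biprod.inl ≫ iso.hom ≫ biprod.fst) := by
    refine aux_isIso iso ?_ ?_
    · have h := h₁ (biprod.inl ≫ iso.hom ≫ biprod.snd)
      simp [reassoc_of% h]
    · have h := h₂ (biprod.inl ≫ iso.inv ≫ biprod.snd)
      simp [reassoc_of% h]
  have hAB : a₀ ≅ b₀ := Biprod.isoElim iso
  let iso2 : a₀ ⊞ a₁ ≅ b₀ ⊞ b₁ :=
    (biprod.braiding a₁ a₀).symm ≪≫ iso ≪≫ biprod.braiding b₁ b₀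
  have hiso' : IsIso (biprod.inl ≫ iso2.hom ≫ biprod.fst) := by
    refine aux_isIso iso2 ?_ ?_
    · have hz : biprod.inr ≫ iso2.inv ≫ biprod.fst = 0 := h₂ _
      simp [hz]
    · have hz : biprod.inr ≫ iso2.hom ≫ biprod.fst = 0 := h₁ _
      simp [hz]
  exact ⟨⟨Biprod.isoElim iso2⟩, ⟨hAB⟩⟩
end

section
/- Let $\mathcal{T}$ be an additive category with a family of additive subcategories $\{\mathfrak{a}_m\}_{m \in \mathbb{Z}}$ such that $\mathrm{Hom}_{\mathcal{T}}(\mathfrak{a}_m, \mathfrak{a}_n) = 0$ whenever $n \notin \{m, m+1\}$. If $a_q \oplus a_{q-1} \oplus \cdots \oplus a_g \cong b_q \oplus b_{q-1} \oplus \cdots \oplus b_g$ with $a_j, b_j \in \mathfrak{a}_j$ for each $j$, then $a_j \cong b_j$ for each $j$. -/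
open CategoryTheory Limits

section Aux

variable {C : Type*} [Category C] [Preadditive C] [HasFiniteBiproducts C]

lemma diag_comp {J : Type} [Fintype J] (f g : J → C)
    (φ : ⨁ f ⟶ ⨁ g) (ψ : ⨁ g ⟶ ⨁ f) (h : φ ≫ ψ = 𝟙 _) (j : J)
    (hc : ∀ k, k ≠ j → (biproduct.ι f j ≫ φ ≫ biproduct.π g k) ≫
      (biproduct.ι g k ≫ ψ ≫ biproduct.π f j) = 0) :
    (biproduct.ι f j ≫ φ ≫ biproduct.π g j) ≫ (biproduct.ι g j ≫ ψ ≫ biproduct.π f j)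
      = 𝟙 (f j) := by
  have h2 : ∑ k, (biproduct.ι f j ≫ φ ≫ biproduct.π g k) ≫
      (biproduct.ι g k ≫ ψ ≫ biproduct.π f j) = 𝟙 (f j) := by
    have : φ ≫ ψ = φ ≫ (∑ k, biproduct.π g k ≫ biproduct.ι g k) ≫ ψ := by
      rw [biproduct.total]; simp
    calc ∑ k, (biproduct.ι f j ≫ φ ≫ biproduct.π g k) ≫
          (biproduct.ι g k ≫ ψ ≫ biproduct.π f j)
        = biproduct.ι f j ≫ (φ ≫ ψ) ≫ biproduct.π f j := by
          rw [this]
          simp [-biproduct.total, Preadditive.comp_sum, Preadditive.sum_comp, Category.assoc]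
      _ = 𝟙 (f j) := by rw [h]; simp
  rw [← h2, Fintype.sum_eq_single j hc]

lemma sub_comp {J : Type} [Fintype J] (f g : J → C) (p : J → Prop) [DecidablePred p]
    (φ : ⨁ f ⟶ ⨁ g) (ψ : ⨁ g ⟶ ⨁ f) (h : φ ≫ ψ = 𝟙 _)
    (hc : ∀ k, ¬ p k → biproduct.fromSubtype f p ≫ φ ≫ biproduct.π g k = 0) :
    (biproduct.fromSubtype f p ≫ φ ≫ biproduct.toSubtype g p) ≫
      (biproduct.fromSubtype g p ≫ ψ ≫ biproduct.toSubtype f p) = 𝟙 _ := by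
  have key : ∀ k : J, (biproduct.fromSubtype f p ≫ φ ≫ biproduct.π g k) ≫
      (if p k then 𝟙 (g k) else 0) ≫ (biproduct.ι g k ≫ ψ ≫ biproduct.toSubtype f p)
      = (biproduct.fromSubtype f p ≫ φ ≫ biproduct.π g k) ≫
        (biproduct.ι g k ≫ ψ ≫ biproduct.toSubtype f p) := by
    intro k
    by_cases hk : p k
    · rw [if_pos hk, Category.id_comp]
    · rw [hc k hk, zero_comp, zero_comp]
  calc (biproduct.fromSubtype f p ≫ φ ≫ biproduct.toSubtype g p) ≫
        (biproduct.fromSubtype g p ≫ ψ ≫ biproduct.toSubtype f p)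
      = biproduct.fromSubtype f p ≫ φ ≫
          (biproduct.toSubtype g p ≫ biproduct.fromSubtype g p) ≫
          ψ ≫ biproduct.toSubtype f p := by simp only [Category.assoc]
    _ = ∑ k, (biproduct.fromSubtype f p ≫ φ ≫ biproduct.π g k) ≫
          (if p k then 𝟙 (g k) else 0) ≫
          (biproduct.ι g k ≫ ψ ≫ biproduct.toSubtype f p) := by
        rw [biproduct.toSubtype_fromSubtype, biproduct.map_eq]
        simp [-biproduct.total, Preadditive.comp_sum, Preadditive.sum_comp, Category.assoc]
    _ = ∑ k, (biproduct.fromSubtype f p ≫ φ ≫ biproduct.π g k) ≫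
          (biproduct.ι g k ≫ ψ ≫ biproduct.toSubtype f p) := by
        exact Finset.sum_congr rfl fun k _ => key k
    _ = biproduct.fromSubtype f p ≫ (φ ≫ (∑ k, biproduct.π g k ≫ biproduct.ι g k) ≫ ψ)
          ≫ biproduct.toSubtype f p := by
        simp [-biproduct.total, Preadditive.comp_sum, Preadditive.sum_comp, Category.assoc]
    _ = 𝟙 _ := by
        rw [biproduct.total]
        simp only [Category.id_comp]
        rw [← Category.assoc, ← Category.assoc]
        rw [Category.assoc (biproduct.fromSubtype f p) φ ψ, h]
        simp [biproduct.fromSubtype_toSubtype]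

end Aux


section Main

variable {T : Type*} [Category T] [Preadditive T] [HasFiniteBiproducts T]

lemma bottom_iso (𝔞 : ℤ → Set T)
    (hvan : ∀ m n : ℤ, n ≠ m → n ≠ m + 1 →
      ∀ (a b : T), a ∈ 𝔞 m → b ∈ 𝔞 n → ∀ f : a ⟶ b, f = 0)
    (g q : ℤ) (a b : ℤ → T)
    (ha : ∀ j ∈ Finset.Icc g q, a j ∈ 𝔞 j)
    (hb : ∀ j ∈ Finset.Icc g q, b j ∈ 𝔞 j)
    (iso : (⨁ fun j : Finset.Icc g q => a j) ≅ (⨁ fun j : Finset.Icc g q => b j))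
    (hg : g ∈ Finset.Icc g q) : Nonempty (a g ≅ b g) := by
  set fA := (fun j : Finset.Icc g q => a j) with hfA
  set fB := (fun j : Finset.Icc g q => b j) with hfB
  let jg : Finset.Icc g q := ⟨g, hg⟩
  have memk : ∀ k : Finset.Icc g q, (k : ℤ) ∈ Finset.Icc g q := fun k => k.2
  refine ⟨⟨biproduct.ι fA jg ≫ iso.hom ≫ biproduct.π fB jg,
      biproduct.ι fB jg ≫ iso.inv ≫ biproduct.π fA jg, ?_, ?_⟩⟩
  · refine diag_comp fA fB iso.hom iso.inv iso.hom_inv_id jg ?_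
    intro k hk
    have hkg : (k : ℤ) ≠ g := fun h => hk (Subtype.ext h)
    by_cases h1 : (k : ℤ) = g + 1
    · have : biproduct.ι fB k ≫ iso.inv ≫ biproduct.π fA jg = 0 :=
        hvan (k : ℤ) g (by omega) (by omega) _ _ (hb _ (memk k)) (ha g hg) _
      rw [this, comp_zero]
    · have : biproduct.ι fA jg ≫ iso.hom ≫ biproduct.π fB k = 0 :=
        hvan g (k : ℤ) hkg h1 _ _ (ha g hg) (hb _ (memk k)) _
      rw [this, zero_comp]
  · refine diag_comp fB fA iso.inv iso.hom iso.inv_hom_id jg ?_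
    intro k hk
    have hkg : (k : ℤ) ≠ g := fun h => hk (Subtype.ext h)
    by_cases h1 : (k : ℤ) = g + 1
    · have : biproduct.ι fA k ≫ iso.hom ≫ biproduct.π fB jg = 0 :=
        hvan (k : ℤ) g (by omega) (by omega) _ _ (ha _ (memk k)) (hb g hg) _
      rw [this, comp_zero]
    · have : biproduct.ι fB jg ≫ iso.inv ≫ biproduct.π fA k = 0 :=
        hvan g (k : ℤ) hkg h1 _ _ (hb g hg) (ha _ (memk k)) _
      rw [this, zero_comp]

def iccEquiv (g q : ℤ) : Finset.Icc (g + 1) q ≃ {k : Finset.Icc g q // ¬ ((k : ℤ) = g)} where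
  toFun k := ⟨⟨(k : ℤ), by
      have := Finset.mem_Icc.mp k.2
      exact Finset.mem_Icc.mpr ⟨by omega, this.2⟩⟩, by
      have := Finset.mem_Icc.mp k.2
      show ¬ ((k : ℤ) = g)
      omega⟩
  invFun k := ⟨((k : Finset.Icc g q) : ℤ), by
      have h3 := Finset.mem_Icc.mp (k : Finset.Icc g q).2
      have h4 : ((k : Finset.Icc g q) : ℤ) ≠ g := k.2
      exact Finset.mem_Icc.mpr ⟨by omega, h3.2⟩⟩
  left_inv k := rfl
  right_inv k := rfl

lemma cancel_aux (𝔞 : ℤ → Set T)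
    (hvan : ∀ m n : ℤ, n ≠ m → n ≠ m + 1 →
      ∀ (a b : T), a ∈ 𝔞 m → b ∈ 𝔞 n → ∀ f : a ⟶ b, f = 0) :
    ∀ n : ℕ, ∀ g q : ℤ, q ≤ g + n →
    ∀ a b : ℤ → T, (∀ j ∈ Finset.Icc g q, a j ∈ 𝔞 j) → (∀ j ∈ Finset.Icc g q, b j ∈ 𝔞 j) →
    ((⨁ fun j : Finset.Icc g q => a j) ≅ (⨁ fun j : Finset.Icc g q => b j)) →
    ∀ j ∈ Finset.Icc g q, Nonempty (a j ≅ b j) := by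
  intro n
  induction n with
  | zero =>
    intro g q hq a b ha hb iso j hj
    obtain ⟨h1, h2⟩ := Finset.mem_Icc.mp hj
    have hjg : j = g := by omega
    subst hjg
    exact bottom_iso 𝔞 hvan j q a b ha hb iso hj
  | succ n IH =>
    intro g q hq a b ha hb iso j hj
    obtain ⟨h1, h2⟩ := Finset.mem_Icc.mp hj
    by_cases hjg : j = g
    · subst hjg
      exact bottom_iso 𝔞 hvan j q a b ha hb iso hj
    · have hj1 : g + 1 ≤ j := by omega
      have memk : ∀ k : Finset.Icc g q, g ≤ (k : ℤ) ∧ (k : ℤ) ≤ q :=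
        fun k => Finset.mem_Icc.mp k.2
      have hcw : ∀ k : Finset.Icc g q, ¬ (¬ ((k : ℤ) = g)) →
          biproduct.fromSubtype (fun k : Finset.Icc g q => a k) (fun k => ¬ ((k : ℤ) = g)) ≫
            iso.hom ≫ biproduct.π (fun k : Finset.Icc g q => b k) k = 0 := by
        intro k hk
        push_neg at hk
        refine biproduct.hom_ext' _ _ fun j' => ?_
        rw [comp_zero, biproduct.ι_fromSubtype_assoc]
        have hj'g : ((j' : Finset.Icc g q) : ℤ) ≠ g := j'.2
        have h3 := memk j'.1
        exact hvan _ _ (by omega) (by omega) _ _ (ha _ j'.1.2) (hb _ k.2) _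
      have hcz : ∀ k : Finset.Icc g q, ¬ (¬ ((k : ℤ) = g)) →
          biproduct.fromSubtype (fun k : Finset.Icc g q => b k) (fun k => ¬ ((k : ℤ) = g)) ≫
            iso.inv ≫ biproduct.π (fun k : Finset.Icc g q => a k) k = 0 := by
        intro k hk
        push_neg at hk
        refine biproduct.hom_ext' _ _ fun j' => ?_
        rw [comp_zero, biproduct.ι_fromSubtype_assoc]
        have hj'g : ((j' : Finset.Icc g q) : ℤ) ≠ g := j'.2
        have h3 := memk j'.1
        exact hvan _ _ (by omega) (by omega) _ _ (hb _ j'.1.2) (ha _ k.2) _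
      have isoSub : (⨁ Subtype.restrict (fun k : Finset.Icc g q => ¬ ((k : ℤ) = g))
            (fun k : Finset.Icc g q => a k)) ≅
          (⨁ Subtype.restrict (fun k : Finset.Icc g q => ¬ ((k : ℤ) = g))
            (fun k : Finset.Icc g q => b k)) :=
        ⟨biproduct.fromSubtype _ _ ≫ iso.hom ≫ biproduct.toSubtype _ _,
         biproduct.fromSubtype _ _ ≫ iso.inv ≫ biproduct.toSubtype _ _,
         sub_comp _ _ _ iso.hom iso.inv iso.hom_inv_id hcw,
         sub_comp _ _ _ iso.inv iso.hom iso.inv_hom_id hcz⟩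
      have isoA : (⨁ fun k : Finset.Icc (g + 1) q => a k) ≅
          ⨁ Subtype.restrict (fun k : Finset.Icc g q => ¬ ((k : ℤ) = g))
            (fun k : Finset.Icc g q => a k) :=
        biproduct.whiskerEquiv (f := fun k : Finset.Icc (g + 1) q => a k)
          (g := Subtype.restrict (fun k : Finset.Icc g q => ¬ ((k : ℤ) = g))
            (fun k : Finset.Icc g q => a k)) (iccEquiv g q) fun k => Iso.refl _
      have isoB : (⨁ fun k : Finset.Icc (g + 1) q => b k) ≅
          ⨁ Subtype.restrict (fun k : Finset.Icc g q => ¬ ((k : ℤ) = g))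
            (fun k : Finset.Icc g q => b k) :=
        biproduct.whiskerEquiv (f := fun k : Finset.Icc (g + 1) q => b k)
          (g := Subtype.restrict (fun k : Finset.Icc g q => ¬ ((k : ℤ) = g))
            (fun k : Finset.Icc g q => b k)) (iccEquiv g q) fun k => Iso.refl _
      have iso' : (⨁ fun k : Finset.Icc (g + 1) q => a k) ≅
          (⨁ fun k : Finset.Icc (g + 1) q => b k) := isoA ≪≫ isoSub ≪≫ isoB.symm
      have hsub : ∀ k ∈ Finset.Icc (g + 1) q, k ∈ Finset.Icc g q := by
        intro k hk
        have := Finset.mem_Icc.mp hk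
        exact Finset.mem_Icc.mpr ⟨by omega, this.2⟩
      exact IH (g + 1) q (by omega) a b (fun k hk => ha k (hsub k hk))
        (fun k hk => hb k (hsub k hk)) iso' j (Finset.mem_Icc.mpr ⟨hj1, h2⟩)

end Main

theorem stmt_1 {T : Type*} [Category T] [Preadditive T] [HasFiniteBiproducts T]
    (𝔞 : ℤ → Set T)
    (hvan : ∀ m n : ℤ, n ≠ m → n ≠ m + 1 →
      ∀ (a b : T), a ∈ 𝔞 m → b ∈ 𝔞 n → ∀ f : a ⟶ b, f = 0)
    (g q : ℤ) (a b : ℤ → T)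
    (ha : ∀ j ∈ Finset.Icc g q, a j ∈ 𝔞 j)
    (hb : ∀ j ∈ Finset.Icc g q, b j ∈ 𝔞 j)
    (iso : (⨁ fun j : Finset.Icc g q => a j) ≅ (⨁ fun j : Finset.Icc g q => b j)) :
    ∀ j ∈ Finset.Icc g q, Nonempty (a j ≅ b j) := by
  exact cancel_aux 𝔞 hvan (q - g).toNat g q (by omega) a b ha hb iso
end

section
/- Let $a_1, a_0$ be objects in an additive category and let $\alpha = \begin{pmatrix} \alpha_{11} & \alpha_{10} \\ 0 & \alpha_{00} \end{pmatrix} : a_1 \oplus a_0 \to a_1 \oplus a_0$ be an idempotent. If the idempotents $\alpha_{11}$ and $\alpha_{00}$ split, then $\alpha$ splits. -/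
open CategoryTheory Limits

/-- An idempotent `e : x ⟶ x` splits if there are `π : x ⟶ y`, `ι : y ⟶ x`
with `π ≫ ι = e` and `ι ≫ π = 𝟙 y`. -/
def SplitsIdem {C : Type*} [Category C] {x : C} (e : x ⟶ x) : Prop :=
  ∃ (y : C) (π : x ⟶ y) (ι : y ⟶ x), π ≫ ι = e ∧ ι ≫ π = 𝟙 y

theorem stmt_5 {C : Type*} [Category C] [Preadditive C] [HasBinaryBiproducts C]
    (a₁ a₀ : C) (α₁₁ : a₁ ⟶ a₁) (α₁₀ : a₀ ⟶ a₁) (α₀₀ : a₀ ⟶ a₀)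
    -- the upper triangular matrix morphism `(α₁₁ α₁₀; 0 α₀₀)`
    (α : a₁ ⊞ a₀ ⟶ a₁ ⊞ a₀)
    (hα : α = biprod.lift (biprod.desc α₁₁ α₁₀) (biprod.desc 0 α₀₀))
    (hidem : α ≫ α = α)
    (h₁₁ : SplitsIdem α₁₁) (h₀₀ : SplitsIdem α₀₀) :
    SplitsIdem α := by
  obtain ⟨y₁, π₁, ι₁, hpi₁, hip₁⟩ := h₁₁
  obtain ⟨y₀, π₀, ι₀, hpi₀, hip₀⟩ := h₀₀
  subst hα
  have h : α₁₀ ≫ α₁₁ + α₀₀ ≫ α₁₀ = α₁₀ := by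
    have := congrArg (fun f => biprod.inr ≫ f ≫ biprod.fst) hidem
    simpa using this
  have hz : ι₀ ≫ α₁₀ ≫ π₁ = 0 := by
    have h2 := congrArg (fun f => ι₀ ≫ f ≫ π₁) h
    simp only [Preadditive.add_comp, Preadditive.comp_add, Category.assoc] at h2
    rw [← hpi₁, ← hpi₀] at h2
    -- ι₀ ≫ α₁₀ ≫ π₁ ≫ ι₁ ≫ π₁ + ι₀ ≫ π₀ ≫ ι₀ ≫ α₁₀ ≫ π₁ = ι₀ ≫ α₁₀ ≫ π₁
    simp only [Category.assoc, hip₁, reassoc_of% hip₀, Category.comp_id] at h2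
    exact add_left_cancel (h2.trans (add_zero _).symm)
  refine ⟨y₁ ⊞ y₀, biprod.lift (biprod.desc π₁ (α₁₀ ≫ π₁)) (biprod.desc 0 π₀),
    biprod.lift (biprod.desc ι₁ (ι₀ ≫ α₁₀)) (biprod.desc 0 ι₀), ?_, ?_⟩
  · ext <;> simp [reassoc_of% hpi₁, reassoc_of% hpi₀, hpi₁, hpi₀]
    · exact h
  · ext <;> simp [reassoc_of% hip₁, reassoc_of% hip₀, hip₁, hip₀, hz, reassoc_of% hz]
end

section
/- Let $\mathcal{T}$ be an additive category with additive subcategories $\{\mathfrak{a}_m\}_{m\in\mathbb{Z}}$ satisfying $\mathrm{Hom}_{\mathcal{T}}(\mathfrak{a}_m,\mathfrak{a}_n)=0$ for $n\notin\{m,m+1\}$ and the decomposition property. If each $\mathfrak{a}_m$ has split idempotents, then each $\mathcal{T}_{[i,s]}$ has split idempotents. -/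
open CategoryTheory Limits
variable {T : Type*} [Category T] [Preadditive T] [HasFiniteBiproducts T]

private lemma cpt_comp {J : Type} [Fintype J] [DecidableEq J] (f : J → T)
    (u v : (⨁ f) ⟶ (⨁ f)) (j k : J) :
    biproduct.components (u ≫ v) j k
      = ∑ l : J, biproduct.components u j l ≫ biproduct.components v l k := by
  simp only [biproduct.components]
  symm
  calc ∑ l : J, (biproduct.ι f j ≫ u ≫ biproduct.π f l) ≫ (biproduct.ι f l ≫ v ≫ biproduct.π f k)
      = biproduct.ι f j ≫ u ≫ (∑ l : J, biproduct.π f l ≫ biproduct.ι f l) ≫ v ≫ biproduct.π f k := by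
        simp only [Preadditive.comp_sum, Preadditive.sum_comp, Category.assoc]
    _ = biproduct.ι f j ≫ (u ≫ v) ≫ biproduct.π f k := by
        rw [biproduct.total]; simp

private lemma cpt_ext_zero {J : Type} [Fintype J] [DecidableEq J] (f : J → T)
    (m : (⨁ f) ⟶ (⨁ f)) (h : ∀ j k : J, biproduct.components m j k = 0) : m = 0 := by
  apply biproduct.hom_ext'; intro j; apply biproduct.hom_ext; intro k
  simpa [biproduct.components] using h j k

private lemma cpt_sub {J : Type} [Fintype J] [DecidableEq J] (f : J → T)
    (u v : (⨁ f) ⟶ (⨁ f)) (j k : J) :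
    biproduct.components (u - v) j k
      = biproduct.components u j k - biproduct.components v j k := by
  simp [biproduct.components]

private lemma bimap_comp {J : Type} [Fintype J] [DecidableEq J] (f g h : J → T)
    (p : ∀ j, f j ⟶ g j) (q : ∀ j, g j ⟶ h j) :
    biproduct.map p ≫ biproduct.map q = biproduct.map (fun j => p j ≫ q j) := by
  apply biproduct.hom_ext; intro k; simp

private lemma cpt_map_self {J : Type} [Fintype J] [DecidableEq J] (f g : J → T)
    (p : ∀ j, f j ⟶ g j) (j : J) :
    biproduct.components (biproduct.map p) j j = p j := by
  simp [biproduct.components]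

private lemma cpt_map_ne {J : Type} [Fintype J] [DecidableEq J] (f g : J → T)
    (p : ∀ j, f j ⟶ g j) (j k : J) (h : j ≠ k) :
    biproduct.components (biproduct.map p) j k = 0 := by
  simp [biproduct.components, biproduct.ι_π, h]

/-- The objects of `T` isomorphic to a finite direct sum of objects `a j ∈ 𝔞 j`
with `j` ranging over the integer interval `[i, s]`. -/
def truncSet (𝔞 : ℤ → Set T) (i s : ℤ) : Set T :=
  {X | ∃ a : ℤ → T, (∀ j ∈ Finset.Icc i s, a j ∈ 𝔞 j) ∧
    Nonempty (X ≅ ⨁ fun j : Finset.Icc i s => a j)}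

theorem stmt_7 (𝔞 : ℤ → Set T)
    (hvan : ∀ m n : ℤ, n ≠ m → n ≠ m + 1 →
      ∀ (a b : T), a ∈ 𝔞 m → b ∈ 𝔞 n → ∀ f : a ⟶ b, f = 0)
    (hdec : ∀ X : T, ∃ i s : ℤ, X ∈ truncSet 𝔞 i s)
    (hsplit : ∀ m : ℤ, ∀ X ∈ 𝔞 m, ∀ e : X ⟶ X, e ≫ e = e →
      ∃ Y ∈ 𝔞 m, ∃ (π : X ⟶ Y) (ι : Y ⟶ X), π ≫ ι = e ∧ ι ≫ π = 𝟙 Y) :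
    ∀ i s : ℤ, ∀ X ∈ truncSet 𝔞 i s, ∀ e : X ⟶ X, e ≫ e = e →
      ∃ Y ∈ truncSet 𝔞 i s, ∃ (π : X ⟶ Y) (ι : Y ⟶ X), π ≫ ι = e ∧ ι ≫ π = 𝟙 Y := by
  intro i s X hX e he
  obtain ⟨a, ha, ⟨h0⟩⟩ := hX
  set f : Finset.Icc i s → T := fun j => a j with hf
  set e' : (⨁ f) ⟶ (⨁ f) := h0.inv ≫ e ≫ h0.hom with he'def
  have he' : e' ≫ e' = e' := by
    simp [he'def, reassoc_of% he]
  -- components of any endomorphism vanish outside the band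
  have hv : ∀ (u : (⨁ f) ⟶ (⨁ f)) (j k : Finset.Icc i s),
      (k:ℤ) ≠ (j:ℤ) → (k:ℤ) ≠ (j:ℤ)+1 → biproduct.components u j k = 0 :=
    fun u j k h1 h2 => hvan j k h1 h2 _ _ (ha _ j.2) (ha _ k.2) _
  -- diagonal entries are idempotent
  have hdiag : ∀ j : Finset.Icc i s,
      biproduct.components e' j j ≫ biproduct.components e' j j
        = biproduct.components e' j j := by
    intro j
    have h1 : biproduct.components (e' ≫ e') j j = biproduct.components e' j j := by rw [he']
    rw [cpt_comp] at h1
    have h2 : ∑ l : Finset.Icc i s, biproduct.components e' j l ≫ biproduct.components e' l j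
        = biproduct.components e' j j ≫ biproduct.components e' j j := by
      apply Finset.sum_eq_single_of_mem j (Finset.mem_univ j)
      intro l _ hl
      by_cases hc : (l:ℤ) = (j:ℤ)+1
      · rw [hv e' l j (fun h => hl (Subtype.ext h.symm)) (by omega), comp_zero]
      · rw [hv e' j l (fun h => hl (Subtype.ext h)) hc, zero_comp]
    rw [h2] at h1
    exact h1
  set D : (⨁ f) ⟶ (⨁ f) := biproduct.map (fun j => biproduct.components e' j j) with hDdef
  have hDD : D ≫ D = D := by
    rw [hDdef, bimap_comp]
    exact congrArg biproduct.map (funext fun j => hdiag j)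
  set N : (⨁ f) ⟶ (⨁ f) := e' - D with hNdef
  have heDN : e' = D + N := by rw [hNdef]; abel
  have hUpN : ∀ j k : Finset.Icc i s, (k:ℤ) ≠ (j:ℤ)+1 → biproduct.components N j k = 0 := by
    intro j k hk
    rw [hNdef, cpt_sub]
    by_cases hc : (k:ℤ) = (j:ℤ)
    · obtain rfl : j = k := Subtype.ext hc.symm
      rw [hDdef, cpt_map_self, sub_self]
    · rw [hv e' j k hc hk, hDdef,
        cpt_map_ne _ _ _ _ _ (fun h => hc (by rw [h])), sub_zero]
  -- products of band morphisms
  have hUpL : ∀ (u v : (⨁ f) ⟶ (⨁ f)),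
      (∀ j k : Finset.Icc i s, (k:ℤ) ≠ (j:ℤ)+1 → biproduct.components v j k = 0) →
      (∀ j k : Finset.Icc i s, (k:ℤ) ≠ (j:ℤ)+1 → biproduct.components (u ≫ v) j k = 0) := by
    intro u v hUp j k hk
    by_cases hc : (k:ℤ) = (j:ℤ)
    · rw [cpt_comp]
      apply Finset.sum_eq_zero
      intro l _
      by_cases hl : (k:ℤ) = (l:ℤ)+1
      · rw [hv u j l (by omega) (by omega), zero_comp]
      · rw [hUp l k hl, comp_zero]
    · exact hv _ j k hc hk
  have hUpR : ∀ (u v : (⨁ f) ⟶ (⨁ f)),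
      (∀ j k : Finset.Icc i s, (k:ℤ) ≠ (j:ℤ)+1 → biproduct.components u j k = 0) →
      (∀ j k : Finset.Icc i s, (k:ℤ) ≠ (j:ℤ)+1 → biproduct.components (u ≫ v) j k = 0) := by
    intro u v hUp j k hk
    by_cases hc : (k:ℤ) = (j:ℤ)
    · rw [cpt_comp]
      apply Finset.sum_eq_zero
      intro l _
      by_cases hl : (l:ℤ) = (j:ℤ)+1
      · rw [hv v l k (by omega) (by omega), comp_zero]
      · rw [hUp j l hl, zero_comp]
    · exact hv _ j k hc hk
  have mulUp : ∀ (u v : (⨁ f) ⟶ (⨁ f)),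
      (∀ j k : Finset.Icc i s, (k:ℤ) ≠ (j:ℤ)+1 → biproduct.components u j k = 0) →
      (∀ j k : Finset.Icc i s, (k:ℤ) ≠ (j:ℤ)+1 → biproduct.components v j k = 0) →
      u ≫ v = 0 := by
    intro u v hu hvv
    apply cpt_ext_zero
    intro j k
    by_cases hc : (k:ℤ) = (j:ℤ) ∨ (k:ℤ) = (j:ℤ)+1
    · rw [cpt_comp]
      apply Finset.sum_eq_zero
      intro l _
      by_cases hl : (l:ℤ) = (j:ℤ)+1
      · rw [hvv l k (by omega), comp_zero]
      · rw [hu j l hl, zero_comp]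
    · push_neg at hc
      exact hv _ j k hc.1 hc.2
  have hNN : N ≫ N = 0 := mulUp N N hUpN hUpN
  have hDNND : D ≫ N + N ≫ D = N := by
    have h1 : D + (D ≫ N + N ≫ D) = D + N := by
      calc D + (D ≫ N + N ≫ D) = (D + N) ≫ (D + N) := by
            simp only [Preadditive.add_comp, Preadditive.comp_add, hDD, hNN, add_zero]
            abel
        _ = e' ≫ e' := by rw [← heDN]
        _ = e' := he'
        _ = D + N := heDN
    exact add_left_cancel h1
  have hDND : D ≫ N ≫ D = 0 := by
    have h1 := congrArg (fun m => D ≫ m) hDNND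
    simp only [Preadditive.comp_add, ← Category.assoc, hDD] at h1
    simpa using h1
  have hUpDN : ∀ j k : Finset.Icc i s, (k:ℤ) ≠ (j:ℤ)+1 →
      biproduct.components (D ≫ N) j k = 0 := hUpL D N hUpN
  have hUpND : ∀ j k : Finset.Icc i s, (k:ℤ) ≠ (j:ℤ)+1 →
      biproduct.components (N ≫ D) j k = 0 := hUpR N D hUpN
  set U : (⨁ f) ⟶ (⨁ f) := 𝟙 _ + D ≫ N - N ≫ D with hUdef
  set W : (⨁ f) ⟶ (⨁ f) := 𝟙 _ - D ≫ N + N ≫ D with hWdef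
  have hAA : (D ≫ N) ≫ (D ≫ N) = 0 := mulUp _ _ hUpDN hUpDN
  have hAB : (D ≫ N) ≫ (N ≫ D) = 0 := mulUp _ _ hUpDN hUpND
  have hBA : (N ≫ D) ≫ (D ≫ N) = 0 := mulUp _ _ hUpND hUpDN
  have hBB : (N ≫ D) ≫ (N ≫ D) = 0 := mulUp _ _ hUpND hUpND
  have hUW : U ≫ W = 𝟙 _ := by
    rw [hUdef, hWdef]
    simp only [Preadditive.add_comp, Preadditive.sub_comp, Preadditive.comp_add,
      Preadditive.comp_sub, Category.id_comp, Category.comp_id, hAA, hAB, hBA, hBB]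
    abel
  have hWU : W ≫ U = 𝟙 _ := by
    rw [hUdef, hWdef]
    simp only [Preadditive.add_comp, Preadditive.sub_comp, Preadditive.comp_add,
      Preadditive.comp_sub, Category.id_comp, Category.comp_id, hAA, hAB, hBA, hBB]
    abel
  have hUe : U ≫ e' = D ≫ U := by
    have f1 : (D ≫ N) ≫ D = 0 := by rw [Category.assoc]; exact hDND
    have f2 : (D ≫ N) ≫ N = 0 := by rw [Category.assoc, hNN, comp_zero]
    have f3 : (N ≫ D) ≫ D = N ≫ D := by rw [Category.assoc, hDD]
    have f4 : (N ≫ D) ≫ N = 0 := mulUp _ _ hUpND hUpN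
    have f5 : D ≫ D ≫ N = D ≫ N := by rw [← Category.assoc, hDD]
    have hUe' : U ≫ e' = D + N - N ≫ D := by
      rw [hUdef, heDN]
      simp only [Preadditive.add_comp, Preadditive.sub_comp, Preadditive.comp_add,
        Category.id_comp, f1, f2, f3, f4]
      abel
    have hDU : D ≫ U = D + D ≫ N := by
      rw [hUdef]
      simp only [Preadditive.comp_add, Preadditive.comp_sub, Category.comp_id, f5, hDND]
      abel
    have hmid : D + N - N ≫ D = D + D ≫ N := by
      calc D + N - N ≫ D
          = D + (D ≫ N + N ≫ D) - N ≫ D := by rw [hDNND]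
        _ = D + D ≫ N := by abel
    rw [hUe', hmid, hDU]
  have hWDU : W ≫ D ≫ U = e' := by
    calc W ≫ D ≫ U = W ≫ U ≫ e' := by rw [hUe]
      _ = (W ≫ U) ≫ e' := by rw [Category.assoc]
      _ = e' := by rw [hWU, Category.id_comp]
  -- split the diagonal
  have hsp : ∀ j : Finset.Icc i s, ∃ Y ∈ 𝔞 (j:ℤ), ∃ (p : a (j:ℤ) ⟶ Y) (q : Y ⟶ a (j:ℤ)),
      p ≫ q = biproduct.components e' j j ∧ q ≫ p = 𝟙 Y :=
    fun j => hsplit j _ (ha _ j.2) _ (hdiag j)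
  choose B hB p q hpq hqp using hsp
  set P : (⨁ f) ⟶ (⨁ fun j : Finset.Icc i s => B j) := biproduct.map p with hPdef
  set I : (⨁ fun j : Finset.Icc i s => B j) ⟶ (⨁ f) := biproduct.map q with hIdef
  have hPI : P ≫ I = D := by
    rw [hPdef, hIdef, bimap_comp, hDdef]
    exact congrArg biproduct.map (funext fun j => hpq j)
  have hIP : I ≫ P = 𝟙 _ := by
    rw [hIdef, hPdef, bimap_comp]
    have : (fun j : Finset.Icc i s => q j ≫ p j) = fun j => 𝟙 (B j) := funext fun j => hqp j
    rw [this]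
    apply biproduct.hom_ext; intro k; simp
  -- the image object and its membership in truncSet
  refine ⟨⨁ fun j : Finset.Icc i s => B j, ?_, h0.hom ≫ W ≫ P, I ≫ U ≫ h0.inv, ?_, ?_⟩
  · refine ⟨fun m => if h : m ∈ Finset.Icc i s then B ⟨m, h⟩ else X, fun j hj => ?_, ⟨?_⟩⟩
    · simpa only [dif_pos hj] using hB ⟨j, hj⟩
    · exact biproduct.mapIso fun j => eqToIso (by beta_reduce; rw [dif_pos j.2])
  · have key : W ≫ P ≫ I ≫ U = e' := by
      calc W ≫ P ≫ I ≫ U = W ≫ (P ≫ I) ≫ U := by simp only [Category.assoc]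
        _ = W ≫ D ≫ U := by rw [hPI]
        _ = e' := hWDU
    have h2 := congrArg (fun m => h0.hom ≫ m ≫ h0.inv) key
    simp only [Category.assoc] at h2
    simpa [he'def] using h2
  · have key : U ≫ h0.inv ≫ h0.hom ≫ W = 𝟙 _ := by
      simp only [Iso.inv_hom_id_assoc]
      exact hUW
    calc (I ≫ U ≫ h0.inv) ≫ h0.hom ≫ W ≫ P
        = I ≫ (U ≫ h0.inv ≫ h0.hom ≫ W) ≫ P := by simp only [Category.assoc]
      _ = I ≫ P := by rw [key, Category.id_comp]
      _ = 𝟙 _ := hIP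
end

section
/- In a triangulated category, consider a triangle $X_0 \xrightarrow{\partial^0} X_1 \xrightarrow{\partial^1} X_2 \xrightarrow{\partial^2} \Sigma X_0$ where $X_i = a^i \oplus g^i$ and the differentials are lower triangular: $\partial^0 = \begin{pmatrix}\alpha^0 & 0 \\ \varphi^0 & \gamma^0\end{pmatrix}$, $\partial^1 = \begin{pmatrix}\alpha^1 & 0 \\ \varphi^1 & \gamma^1\end{pmatrix}$, $\partial^2 = \begin{pmatrix}\alpha^2 & 0 \\ 0 & 0\end{pmatrix}$. Assume $\mathrm{Hom}(g^1, a^0) = 0$, $\mathrm{Hom}(g^2, a^1) = 0$, and $\mathrm{Hom}(g^0, \Sigma^{-1} a^2) = 0$. Then there exist morphisms $\delta^1 : g^1 \to g^0$ and $\delta^2 : g^2 \to g^1$ with $\gamma^1 \delta^2 = \mathrm{id}_{g^2}$, $\gamma^0 \delta^1 + \delta^2 \gamma^1 = \mathrm{id}_{g^1}$, and $\delta^1 \gamma^0 = \mathrm{id}_{g^0}$. -/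
open CategoryTheory Limits Pretriangulated

theorem stmt_8 {C : Type*} [Category C] [Preadditive C] [HasZeroObject C]
    [HasShift C ℤ] [∀ n : ℤ, (shiftFunctor C n).Additive] [Pretriangulated C]
    [HasBinaryBiproducts C]
    (a₀ g₀ a₁ g₁ a₂ g₂ : C)
    (α₀ : a₀ ⟶ a₁) (φ₀ : a₀ ⟶ g₁) (γ₀ : g₀ ⟶ g₁)
    (α₁ : a₁ ⟶ a₂) (φ₁ : a₁ ⟶ g₂) (γ₁ : g₁ ⟶ g₂)
    (α₂ : a₂ ⟶ a₀⟦(1 : ℤ)⟧)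
    -- the lower triangular differentials
    (D₀ : a₀ ⊞ g₀ ⟶ a₁ ⊞ g₁) (D₁ : a₁ ⊞ g₁ ⟶ a₂ ⊞ g₂)
    (D₂ : a₂ ⊞ g₂ ⟶ (a₀ ⊞ g₀)⟦(1 : ℤ)⟧)
    (hD₀ : D₀ = biprod.lift (biprod.desc α₀ 0) (biprod.desc φ₀ γ₀))
    (hD₁ : D₁ = biprod.lift (biprod.desc α₁ 0) (biprod.desc φ₁ γ₁))
    (hD₂ : D₂ = biprod.desc (α₂ ≫ (shiftFunctor C (1 : ℤ)).map biprod.inl) 0)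
    (htri : Triangle.mk D₀ D₁ D₂ ∈ distTriang C)
    (hv₁ : ∀ f : g₁ ⟶ a₀, f = 0)
    (hv₂ : ∀ f : g₂ ⟶ a₁, f = 0)
    (hv₀ : ∀ f : g₀ ⟶ a₂⟦(-1 : ℤ)⟧, f = 0) :
    ∃ (δ₁ : g₁ ⟶ g₀) (δ₂ : g₂ ⟶ g₁),
      δ₂ ≫ γ₁ = 𝟙 g₂ ∧ δ₁ ≫ γ₀ + γ₁ ≫ δ₂ = 𝟙 g₁ ∧ γ₀ ≫ δ₁ = 𝟙 g₀ := by
  -- Step 1: lift biprod.inr : g₂ ⟶ a₂ ⊞ g₂ through D₁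
  have hinrD₂ : (biprod.inr : g₂ ⟶ a₂ ⊞ g₂) ≫ D₂ = 0 := by
    rw [hD₂]; simp
  obtain ⟨s, hs⟩ : ∃ s : g₂ ⟶ a₁ ⊞ g₁, (biprod.inr : g₂ ⟶ a₂ ⊞ g₂) = s ≫ D₁ :=
    Triangle.coyoneda_exact₃ _ htri (biprod.inr : g₂ ⟶ a₂ ⊞ g₂) hinrD₂
  replace hs : (biprod.inr : g₂ ⟶ a₂ ⊞ g₂) = s ≫ D₁ := hs
  -- s : g₂ ⟶ a₁ ⊞ g₁, biprod.inr = s ≫ D₁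
  set δ₂ : g₂ ⟶ g₁ := s ≫ biprod.snd with hδ₂
  have hsfst : s ≫ biprod.fst = 0 := hv₂ _
  have hs' : s = δ₂ ≫ (biprod.inr : g₁ ⟶ a₁ ⊞ g₁) := by
    apply biprod.hom_ext
    · simp [hsfst]
    · simp [hδ₂]
  rw [hs', Category.assoc] at hs
  have h1 : δ₂ ≫ γ₁ = 𝟙 g₂ := by
    have := congrArg (· ≫ (biprod.snd : a₂ ⊞ g₂ ⟶ g₂)) hs
    simp only [hD₁, Category.assoc] at this
    simpa using this.symm
  -- Step 2: lift (inr - γ₁ ≫ δ₂ ≫ inr) through D₀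
  have hinrD₁ : (biprod.inr : g₁ ⟶ a₁ ⊞ g₁) ≫ D₁ = γ₁ ≫ biprod.inr := by
    rw [hD₁]; ext <;> simp
  have hk : ((biprod.inr : g₁ ⟶ a₁ ⊞ g₁) - γ₁ ≫ δ₂ ≫ biprod.inr) ≫ D₁ = 0 := by
    rw [Preadditive.sub_comp, hinrD₁]
    simp only [Category.assoc]
    rw [← hs, sub_self]
  obtain ⟨r, hr⟩ : ∃ r : g₁ ⟶ a₀ ⊞ g₀,
      (biprod.inr : g₁ ⟶ a₁ ⊞ g₁) - γ₁ ≫ δ₂ ≫ biprod.inr = r ≫ D₀ :=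
    Triangle.coyoneda_exact₂ _ htri _ hk
  replace hr : (biprod.inr : g₁ ⟶ a₁ ⊞ g₁) - γ₁ ≫ δ₂ ≫ biprod.inr = r ≫ D₀ := hr
  -- r : g₁ ⟶ a₀ ⊞ g₀
  set δ₁ : g₁ ⟶ g₀ := r ≫ biprod.snd with hδ₁
  have hrfst : r ≫ biprod.fst = 0 := hv₁ _
  have hr' : r = δ₁ ≫ (biprod.inr : g₀ ⟶ a₀ ⊞ g₀) := by
    apply biprod.hom_ext
    · simp [hrfst]
    · simp [hδ₁]
  rw [hr', Category.assoc δ₁] at hr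
  have h2 : δ₁ ≫ γ₀ + γ₁ ≫ δ₂ = 𝟙 g₁ := by
    have := congrArg (· ≫ (biprod.snd : a₁ ⊞ g₁ ⟶ g₁)) hr
    simp only [hD₀, Preadditive.sub_comp, Category.assoc] at this
    simp only [biprod.inr_snd, Category.comp_id, biprod.lift_snd, biprod.inr_desc] at this
    rw [sub_eq_iff_eq_add] at this
    exact this.symm
  -- Step 3: show (inr - γ₀ ≫ δ₁ ≫ inr) ≫ D₀ = 0 and use inverse rotation
  have hinrD₀ : (biprod.inr : g₀ ⟶ a₀ ⊞ g₀) ≫ D₀ = γ₀ ≫ biprod.inr := by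
    rw [hD₀]; ext <;> simp
  have hγγ : γ₀ ≫ γ₁ = 0 := by
    have hzero : D₀ ≫ D₁ = 0 := comp_distTriang_mor_zero₁₂ _ htri
    have := congrArg (fun f => (biprod.inr : g₀ ⟶ a₀ ⊞ g₀) ≫ f ≫ (biprod.snd : a₂ ⊞ g₂ ⟶ g₂))
      hzero
    simp only [← Category.assoc, hinrD₀] at this
    simp only [hD₁, Category.assoc] at this
    simpa using this
  have hkk : ((biprod.inr : g₀ ⟶ a₀ ⊞ g₀) - γ₀ ≫ δ₁ ≫ biprod.inr) ≫ D₀ = 0 := by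
    rw [Preadditive.sub_comp, hinrD₀]
    simp only [Category.assoc]
    rw [← hr]
    simp [Preadditive.comp_sub, ← Category.assoc, hγγ]
  have hkk' : ((biprod.inr : g₀ ⟶ a₀ ⊞ g₀) - γ₀ ≫ δ₁ ≫ biprod.inr) ≫
      (Triangle.mk D₀ D₁ D₂).invRotate.mor₂ = 0 := hkk
  obtain ⟨w, hw⟩ : ∃ w : g₀ ⟶ (a₂ ⊞ g₂)⟦(-1 : ℤ)⟧,
      (biprod.inr : g₀ ⟶ a₀ ⊞ g₀) - γ₀ ≫ δ₁ ≫ biprod.inr =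
        w ≫ (Triangle.mk D₀ D₁ D₂).invRotate.mor₁ :=
    Triangle.coyoneda_exact₂ _ (inv_rot_of_distTriang _ htri) _ hkk'
  -- w : g₀ ⟶ (a₂ ⊞ g₂)⟦(-1)⟧
  have hwfst : (w : g₀ ⟶ (a₂ ⊞ g₂)⟦(-1 : ℤ)⟧) ≫ (shiftFunctor C (-1 : ℤ)).map biprod.fst
      = 0 := hv₀ _
  have hwD₂ : (w : g₀ ⟶ (a₂ ⊞ g₂)⟦(-1 : ℤ)⟧) ≫ (shiftFunctor C (-1 : ℤ)).map D₂ = 0 := by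
    have htot : D₂ = biprod.fst ≫ biprod.inl ≫ D₂ + biprod.snd ≫ biprod.inr ≫ D₂ := by
      conv_lhs => rw [← Category.id_comp D₂, ← biprod.total]
      rw [Preadditive.add_comp, Category.assoc, Category.assoc]
    have h2' : (shiftFunctor C (-1 : ℤ)).map (biprod.inr : g₂ ⟶ a₂ ⊞ g₂) ≫
        (shiftFunctor C (-1 : ℤ)).map D₂ = 0 := by
      rw [← Functor.map_comp, hinrD₂, Functor.map_zero]
    rw [htot]
    simp only [Functor.map_add, Functor.map_comp, Preadditive.comp_add, Category.assoc]
    rw [← Category.assoc w, hwfst, zero_comp, zero_add]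
    simp [h2']
  have hkzero : (biprod.inr : g₀ ⟶ a₀ ⊞ g₀) - γ₀ ≫ δ₁ ≫ biprod.inr = 0 := by
    refine hw.trans ?_
    dsimp [Triangle.invRotate]
    show w ≫ (-((shiftFunctor C (-1 : ℤ)).map D₂ ≫
      (shiftEquiv C (1 : ℤ)).unitIso.inv.app (a₀ ⊞ g₀))) = 0
    rw [Preadditive.comp_neg, neg_eq_zero]
    exact (Category.assoc _ _ _).symm.trans
      ((congrArg (· ≫ (shiftEquiv C (1 : ℤ)).unitIso.inv.app (a₀ ⊞ g₀)) hwD₂).trans zero_comp)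
  have h3 : γ₀ ≫ δ₁ = 𝟙 g₀ := by
    have := congrArg (fun f => f ≫ (biprod.snd : a₀ ⊞ g₀ ⟶ g₀)) (sub_eq_zero.mp hkzero)
    simpa using this.symm
  exact ⟨δ₁, δ₂, h1, h2, h3⟩
end

section
/- In a triangulated category, consider a triangle $\Sigma^{-1}(b_0 \oplus h_0) \xrightarrow{\begin{pmatrix}\Sigma^{-1}\beta_0 & 0 \\ 0 & 0\end{pmatrix}} b_2 \oplus h_2 \xrightarrow{\begin{pmatrix}\beta_2 & \psi_2 \\ 0 & \eta_2\end{pmatrix}} b_1 \oplus h_1 \xrightarrow{\begin{pmatrix}\beta_1 & \psi_1 \\ 0 & \eta_1\end{pmatrix}} b_0 \oplus h_0$, and assume $\mathrm{Hom}(b_0, h_1) = 0$, $\mathrm{Hom}(b_1, h_2) = 0$, $\mathrm{Hom}(\Sigma b_2, h_0) = 0$. Then the triangle splits as a direct sum of a triangle $\Sigma^{-1}b_0 \to b_2 \to b_1 \to b_0$ and a contractible triangle $\Sigma^{-1}h_0 \xrightarrow{0} h_2 \xrightarrow{\eta_2} h_1 \xrightarrow{\eta_1} h_0$; in particular there exist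 $\epsilon_0 : h_0 \to h_1$ and $\epsilon_1 : h_1 \to h_2$ with $\eta_1\epsilon_0 = \mathrm{id}_{h_0}$, $\eta_2\epsilon_1 + \epsilon_0\eta_1 = \mathrm{id}_{h_1}$, and $\epsilon_1\eta_2 = \mathrm{id}_{h_2}$. -/
open CategoryTheory Limits Pretriangulated

namespace Stmt17Aux
open Category


section
variable {C : Type*} [Category C] [Preadditive C]

lemma comp_exp {A P Q B : C} [HasBinaryBiproduct P Q] (x : A ⟶ P ⊞ Q) (w : P ⊞ Q ⟶ B) :
    x ≫ w = (x ≫ biprod.fst) ≫ biprod.inl ≫ w + (x ≫ biprod.snd) ≫ biprod.inr ≫ w := by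
  calc x ≫ w = x ≫ 𝟙 _ ≫ w := by rw [id_comp]
    _ = x ≫ (biprod.fst ≫ biprod.inl + biprod.snd ≫ biprod.inr) ≫ w := by rw [biprod.total]
    _ = _ := by simp only [Preadditive.add_comp, Preadditive.comp_add, Category.assoc]

@[simps]
noncomputable def biprodPiIso (g : WalkingPair → C) [HasBinaryBiproduct (g .left) (g .right)]
    [HasProduct g] : (g .left) ⊞ (g .right) ≅ ∏ᶜ g where
  hom := Pi.lift (fun j => match j with
    | .left => (biprod.fst : (g .left) ⊞ (g .right) ⟶ _)
    | .right => biprod.snd)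
  inv := biprod.lift (Pi.π g .left) (Pi.π g .right)
  hom_inv_id := by ext <;> simp
  inv_hom_id := by
    apply limit.hom_ext
    rintro ⟨(_ | _)⟩ <;> simp

end

lemma sum_distinguished {C : Type*} [Category C] [Preadditive C] [HasZeroObject C] [HasShift C ℤ]
    [∀ n : ℤ, (shiftFunctor C n).Additive] [Pretriangulated C] [HasBinaryBiproducts C]
    (T₁ T₂ : Triangle C) (h₁ : T₁ ∈ distTriang C) (h₂ : T₂ ∈ distTriang C) :
    Triangle.mk (biprod.map T₁.mor₁ T₂.mor₁) (biprod.map T₁.mor₂ T₂.mor₂)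
      (biprod.desc (T₁.mor₃ ≫ (shiftFunctor C (1 : ℤ)).map biprod.inl)
        (T₂.mor₃ ≫ (shiftFunctor C (1 : ℤ)).map biprod.inr)) ∈ distTriang C := by
  let F : WalkingPair → Triangle C := fun j => WalkingPair.casesOn j T₁ T₂
  refine isomorphic_distinguished _ (productTriangle_distinguished F ?_) _ ?_
  · rintro (_ | _) <;> assumption
  dsimp only [F, productTriangle, Triangle.mk]
  refine Triangle.isoMk _ _ (biprodPiIso (fun j => (F j).obj₁))
    (biprodPiIso (fun j => (F j).obj₂)) (biprodPiIso (fun j => (F j).obj₃)) ?_ ?_ ?_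
  · apply limit.hom_ext
    rintro ⟨(_ | _)⟩ <;> simp [F]
  · apply limit.hom_ext
    rintro ⟨(_ | _)⟩ <;> simp [F]
  · rw [← cancel_mono (piComparison (shiftFunctor C (1 : ℤ)) (fun j => (F j).obj₁))]
    dsimp only [productTriangle]
    simp only [Category.assoc, IsIso.inv_hom_id, Category.comp_id, Triangle.mk_mor₃]
    apply limit.hom_ext
    rintro ⟨(_ | _)⟩ <;>
      · apply biprod.hom_ext' <;>
          simp [F, piComparison_comp_π, ← Functor.map_comp]

end Stmt17Aux


theorem stmt_17 {C : Type*} [Category C] [Preadditive C] [HasZeroObject C]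
    [HasShift C ℤ] [∀ n : ℤ, (shiftFunctor C n).Additive] [Pretriangulated C]
    [HasBinaryBiproducts C]
    (b₀ h₀ b₁ h₁ b₂ h₂ : C)
    (β₂ : b₂ ⟶ b₁) (ψ₂ : h₂ ⟶ b₁) (η₂ : h₂ ⟶ h₁)
    (β₁ : b₁ ⟶ b₀) (ψ₁ : h₁ ⟶ b₀) (η₁ : h₁ ⟶ h₀)
    -- the connecting morphism `Σ⁻¹ β₀`, given here as `δ : b₀ ⟶ Σ b₂`
    (δ : b₀ ⟶ b₂⟦(1 : ℤ)⟧)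
    -- the upper triangular differentials
    (D₂ : b₂ ⊞ h₂ ⟶ b₁ ⊞ h₁) (D₁ : b₁ ⊞ h₁ ⟶ b₀ ⊞ h₀)
    (D₀ : b₀ ⊞ h₀ ⟶ (b₂ ⊞ h₂)⟦(1 : ℤ)⟧)
    (hD₂ : D₂ = biprod.lift (biprod.desc β₂ ψ₂) (biprod.desc 0 η₂))
    (hD₁ : D₁ = biprod.lift (biprod.desc β₁ ψ₁) (biprod.desc 0 η₁))
    (hD₀ : D₀ = biprod.desc (δ ≫ (shiftFunctor C (1 : ℤ)).map biprod.inl) 0)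
    (htri : Triangle.mk D₂ D₁ D₀ ∈ distTriang C)
    (hv₁ : ∀ f : b₀ ⟶ h₁, f = 0)
    (hv₂ : ∀ f : b₁ ⟶ h₂, f = 0)
    (hv₀ : ∀ f : b₂⟦(1 : ℤ)⟧ ⟶ h₀, f = 0) :
    -- the triangle splits as the direct sum of the `b`-triangle and a
    -- contractible `h`-triangle
    (Triangle.mk β₂ β₁ δ ∈ distTriang C) ∧
    (Triangle.mk η₂ η₁ (0 : h₀ ⟶ h₂⟦(1 : ℤ)⟧) ∈ distTriang C) ∧
    ∃ (ε₀ : h₀ ⟶ h₁) (ε₁ : h₁ ⟶ h₂),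
      ε₀ ≫ η₁ = 𝟙 h₀ ∧ ε₁ ≫ η₂ + η₁ ≫ ε₀ = 𝟙 h₁ ∧ η₂ ≫ ε₁ = 𝟙 h₂ := by
  obtain ⟨y, f, g, hT'⟩ := distinguished_cocone_triangle₂ δ
  -- the direct sum triangle `W`
  have hW : Triangle.mk (biprod.map f biprod.inl) (biprod.map g biprod.snd) D₀
      ∈ distTriang C := by
    have h := Stmt17Aux.sum_distinguished (Triangle.mk f g δ) (binaryBiproductTriangle h₂ h₀)
      hT' (binaryBiproductTriangle_distinguished h₂ h₀)
    simp only [Triangle.mk_mor₁, Triangle.mk_mor₂, Triangle.mk_mor₃,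
      binaryBiproductTriangle_mor₁, binaryBiproductTriangle_mor₂,
      binaryBiproductTriangle_mor₃, zero_comp] at h
    rw [hD₀]
    exact (congrArg (fun c => Triangle.mk (biprod.map f biprod.inl) (biprod.map g biprod.snd)
      (biprod.desc (δ ≫ (shiftFunctor C (1 : ℤ)).map biprod.inl) c) ∈ distTriang C)
      (zero_comp (X := h₀) (f := (shiftFunctor C (1 : ℤ)).map (biprod.inr : h₂ ⟶ b₂ ⊞ h₂)))).mp h
  -- compare `W` and the given triangle
  obtain ⟨θ, hθ₁, hθ₂'pre⟩ : ∃ θ : y ⊞ (h₂ ⊞ h₀) ⟶ b₁ ⊞ h₁,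
      biprod.map f biprod.inl ≫ θ = 𝟙 _ ≫ D₂ ∧ biprod.map g biprod.snd ≫ 𝟙 _ = θ ≫ D₁ :=
    complete_distinguished_triangle_morphism₂ _ _ hW htri
    (𝟙 _) (𝟙 _) ((congrArg (fun k => D₀ ≫ k) ((shiftFunctor C (1 : ℤ)).map_id _)).trans
      ((Category.comp_id D₀).trans (Category.id_comp D₀).symm))
  simp only [Triangle.mk_mor₁, Triangle.mk_mor₂, Triangle.mk_mor₃, Category.id_comp, Category.comp_id]
    at hθ₁ hθ₂'pre
  have hθ₂ : θ ≫ D₁ = biprod.map g biprod.snd := hθ₂'pre.symm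
  haveI : IsIso θ := isIso₂_of_isIso₁₃
    (Triangle.homMk (Triangle.mk (biprod.map f biprod.inl) (biprod.map g biprod.snd) D₀)
      (Triangle.mk D₂ D₁ D₀) (𝟙 _) θ (𝟙 _) (hθ₁.trans (Category.id_comp D₂).symm)
      ((Category.comp_id _).trans hθ₂.symm)
      ((congrArg (fun k => D₀ ≫ k) ((shiftFunctor C (1 : ℤ)).map_id _)).trans
        ((Category.comp_id D₀).trans (Category.id_comp D₀).symm)))
    hW htri (by exact (inferInstance : IsIso (𝟙 (b₂ ⊞ h₂))))
    (by exact (inferInstance : IsIso (𝟙 (b₀ ⊞ h₀))))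
  have hWm : D₂ ≫ inv θ = biprod.map f biprod.inl := by
    rw [← hθ₁]; simp
  have hθ₂inv : inv θ ≫ biprod.map g biprod.snd = D₁ := by
    rw [← hθ₂, IsIso.inv_hom_id_assoc]
  -- `u = 0`
  have hfu : f ≫ (biprod.inl : y ⟶ y ⊞ (h₂ ⊞ h₀)) ≫ θ ≫ biprod.snd = 0 := by
    calc f ≫ biprod.inl ≫ θ ≫ biprod.snd
        = biprod.inl ≫ biprod.map f biprod.inl ≫ θ ≫ biprod.snd := by simp
      _ = biprod.inl ≫ D₂ ≫ biprod.snd := by rw [reassoc_of% hθ₁]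
      _ = 0 := by simp [hD₂]
  obtain ⟨t, ht⟩ := Triangle.yoneda_exact₂ (Triangle.mk f g δ) hT' _ hfu
  have hu0 : (biprod.inl : y ⟶ y ⊞ (h₂ ⊞ h₀)) ≫ θ ≫ biprod.snd = 0 := by
    rw [ht, hv₁ t]; exact comp_zero
  -- components of `inv θ` on `b₁`
  have hu'₂ : (biprod.inl : b₁ ⟶ b₁ ⊞ h₁) ≫ inv θ ≫ biprod.snd ≫ biprod.fst = 0 := hv₂ _
  have hu'₀ : (biprod.inl : b₁ ⟶ b₁ ⊞ h₁) ≫ inv θ ≫ biprod.snd ≫ biprod.snd = 0 := by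
    calc (biprod.inl : b₁ ⟶ b₁ ⊞ h₁) ≫ inv θ ≫ biprod.snd ≫ biprod.snd
        = biprod.inl ≫ inv θ ≫ biprod.map g biprod.snd ≫ biprod.snd := by simp
      _ = biprod.inl ≫ D₁ ≫ biprod.snd := by rw [reassoc_of% hθ₂inv]
      _ = 0 := by simp [hD₁]
  have hu' : (biprod.inl : b₁ ⟶ b₁ ⊞ h₁) ≫ inv θ ≫ biprod.snd = 0 := by
    apply biprod.hom_ext <;> simp [hu'₂, hu'₀]
  have hq₀ : (biprod.inr : h₁ ⟶ b₁ ⊞ h₁) ≫ inv θ ≫ biprod.snd ≫ biprod.snd = η₁ := by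
    calc (biprod.inr : h₁ ⟶ b₁ ⊞ h₁) ≫ inv θ ≫ biprod.snd ≫ biprod.snd
        = biprod.inr ≫ inv θ ≫ biprod.map g biprod.snd ≫ biprod.snd := by simp
      _ = biprod.inr ≫ D₁ ≫ biprod.snd := by rw [reassoc_of% hθ₂inv]
      _ = η₁ := by simp [hD₁]
  -- rows of `D₂`
  have hd1 : (biprod.inr : h₂ ⟶ b₂ ⊞ h₂) ≫ D₂ ≫ biprod.fst = ψ₂ := by simp [hD₂]
  have hd2 : (biprod.inr : h₂ ⟶ b₂ ⊞ h₂) ≫ D₂ ≫ biprod.snd = η₂ := by simp [hD₂]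
  -- `snd ≫ η₁ = D₁ ≫ snd`
  have hsndη : (biprod.snd : b₁ ⊞ h₁ ⟶ h₁) ≫ η₁ = D₁ ≫ biprod.snd := by
    rw [hD₁]; apply biprod.hom_ext' <;> simp
  -- (i)  ε₀ ≫ η₁ = 𝟙
  have hi : (biprod.inr : h₀ ⟶ h₂ ⊞ h₀) ≫ biprod.inr ≫ θ ≫ biprod.snd ≫ η₁ = 𝟙 h₀ := by
    calc (biprod.inr : h₀ ⟶ h₂ ⊞ h₀) ≫ biprod.inr ≫ θ ≫ biprod.snd ≫ η₁
        = biprod.inr ≫ biprod.inr ≫ θ ≫ D₁ ≫ biprod.snd := by rw [hsndη]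
      _ = biprod.inr ≫ biprod.inr ≫ biprod.map g biprod.snd ≫ biprod.snd := by
          rw [reassoc_of% hθ₂]
      _ = 𝟙 h₀ := by simp
  -- (ii)  η₂ ≫ ε₁ = 𝟙
  have hii : η₂ ≫ (biprod.inr : h₁ ⟶ b₁ ⊞ h₁) ≫ inv θ ≫ biprod.snd ≫ biprod.fst = 𝟙 h₂ := by
    have e := Stmt17Aux.comp_exp ((biprod.inr : h₂ ⟶ b₂ ⊞ h₂) ≫ D₂)
      (inv θ ≫ biprod.snd ≫ biprod.fst)
    simp only [Category.assoc] at e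
    rw [reassoc_of% hWm, reassoc_of% hd1, reassoc_of% hd2, hu'₂] at e
    simpa using e.symm
  -- (v)  ε₀ ≫ ε₁ = 0
  have hεε : (biprod.inr : h₀ ⟶ h₂ ⊞ h₀) ≫ biprod.inr ≫ θ ≫ biprod.snd ≫
      biprod.inr ≫ inv θ ≫ biprod.snd ≫ biprod.fst = 0 := by
    have e := Stmt17Aux.comp_exp ((biprod.inr : h₀ ⟶ h₂ ⊞ h₀) ≫ biprod.inr ≫ θ)
      (inv θ ≫ biprod.snd ≫ biprod.fst)
    simp only [Category.assoc, IsIso.hom_inv_id_assoc] at e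
    rw [hu'₂] at e
    simpa using e.symm
  -- η₂ ≫ η₁ = 0
  have hηη : η₂ ≫ η₁ = 0 := by
    have h0 : D₂ ≫ D₁ = 0 := comp_distTriang_mor_zero₁₂ _ htri
    calc η₂ ≫ η₁ = biprod.inr ≫ D₂ ≫ biprod.snd ≫ η₁ := by rw [reassoc_of% hd2]
      _ = biprod.inr ≫ D₂ ≫ D₁ ≫ biprod.snd := by rw [hsndη]
      _ = 0 := by rw [reassoc_of% h0]; simp
  -- row of θ on h₂ composed with snd
  have hrow2s : (biprod.inl : h₂ ⟶ h₂ ⊞ h₀) ≫ biprod.inr ≫ θ ≫ biprod.snd = η₂ := by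
    calc (biprod.inl : h₂ ⟶ h₂ ⊞ h₀) ≫ biprod.inr ≫ θ ≫ biprod.snd
        = biprod.inr ≫ biprod.map f biprod.inl ≫ θ ≫ biprod.snd := by simp
      _ = biprod.inr ≫ D₂ ≫ biprod.snd := by rw [reassoc_of% hθ₁]
      _ = η₂ := hd2
  -- (iii)  ε₁ ≫ η₂ + η₁ ≫ ε₀ = 𝟙
  have hiii : ((biprod.inr : h₁ ⟶ b₁ ⊞ h₁) ≫ inv θ ≫ biprod.snd ≫ biprod.fst) ≫ η₂ +
      η₁ ≫ ((biprod.inr : h₀ ⟶ h₂ ⊞ h₀) ≫ biprod.inr ≫ θ ≫ biprod.snd) = 𝟙 h₁ := by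
    have e1 := Stmt17Aux.comp_exp ((biprod.inr : h₁ ⟶ b₁ ⊞ h₁) ≫ inv θ) (θ ≫ biprod.snd)
    simp only [Category.assoc, IsIso.inv_hom_id_assoc] at e1
    rw [hu0] at e1
    have e2 := Stmt17Aux.comp_exp ((biprod.inr : h₁ ⟶ b₁ ⊞ h₁) ≫ inv θ ≫ biprod.snd)
      ((biprod.inr : h₂ ⊞ h₀ ⟶ y ⊞ (h₂ ⊞ h₀)) ≫ θ ≫ biprod.snd)
    simp only [Category.assoc] at e2
    rw [hrow2s, reassoc_of% hq₀] at e2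
    simp only [comp_zero, zero_comp, zero_add, biprod.inr_snd] at e1
    simp only [Category.assoc] at e2 ⊢
    rw [← e2, ← e1]
  -- the `b`-triangle is distinguished
  have hβinl : β₂ ≫ (biprod.inl : b₁ ⟶ b₁ ⊞ h₁) = biprod.inl ≫ D₂ := by
    rw [hD₂]; apply biprod.hom_ext <;> simp
  have ha'a : ((biprod.inl : b₁ ⟶ b₁ ⊞ h₁) ≫ inv θ ≫ biprod.fst) ≫
      ((biprod.inl : y ⟶ y ⊞ (h₂ ⊞ h₀)) ≫ θ ≫ biprod.fst) = 𝟙 b₁ := by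
    have e := Stmt17Aux.comp_exp ((biprod.inl : b₁ ⟶ b₁ ⊞ h₁) ≫ inv θ) (θ ≫ biprod.fst)
    simp only [Category.assoc, IsIso.inv_hom_id_assoc] at e
    rw [reassoc_of% hu'] at e
    simp only [Category.assoc, zero_comp, comp_zero, add_zero, biprod.inl_fst] at e
    simp only [Category.assoc]
    exact e.symm
  have haa' : ((biprod.inl : y ⟶ y ⊞ (h₂ ⊞ h₀)) ≫ θ ≫ biprod.fst) ≫
      ((biprod.inl : b₁ ⟶ b₁ ⊞ h₁) ≫ inv θ ≫ biprod.fst) = 𝟙 y := by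
    have e := Stmt17Aux.comp_exp ((biprod.inl : y ⟶ y ⊞ (h₂ ⊞ h₀)) ≫ θ) (inv θ ≫ biprod.fst)
    simp only [Category.assoc, IsIso.hom_inv_id_assoc] at e
    rw [reassoc_of% hu0] at e
    simp only [Category.assoc, zero_comp, comp_zero, add_zero, biprod.inl_fst] at e
    simp only [Category.assoc]
    exact e.symm
  refine ⟨?_, ?_, ?_⟩
  · refine isomorphic_distinguished _ hT' _ ?_
    dsimp only [Triangle.mk]
    refine Triangle.isoMk _ _ (Iso.refl _)
      ⟨(biprod.inl ≫ inv θ ≫ biprod.fst : b₁ ⟶ y), (biprod.inl ≫ θ ≫ biprod.fst : y ⟶ b₁), ha'a, haa'⟩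
      (Iso.refl _) ?_ ?_ ?_
    · dsimp
      rw [Category.id_comp, reassoc_of% hβinl, reassoc_of% hWm]
      simp
    · dsimp
      rw [Category.comp_id]
      have hfstg : (biprod.fst : y ⊞ (h₂ ⊞ h₀) ⟶ y) ≫ g =
          biprod.map g biprod.snd ≫ biprod.fst := by simp
      simp only [Category.assoc]
      rw [hfstg, reassoc_of% hθ₂inv]
      simp [hD₁]
    · exact (congrArg (fun k => δ ≫ k) ((shiftFunctor C (1 : ℤ)).map_id _)).trans
        ((Category.comp_id δ).trans (Category.id_comp δ).symm)
  · refine isomorphic_distinguished _ (binaryBiproductTriangle_distinguished h₂ h₀) _ ?_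
    dsimp only [binaryBiproductTriangle, Triangle.mk]
    refine Triangle.isoMk _ _ (Iso.refl _)
      ⟨biprod.lift (biprod.inr ≫ inv θ ≫ biprod.snd ≫ biprod.fst : h₁ ⟶ h₂) η₁,
       biprod.desc η₂ (biprod.inr ≫ biprod.inr ≫ θ ≫ biprod.snd), ?_, ?_⟩
      (Iso.refl _) ?_ ?_ ?_
    · rw [biprod.lift_desc]
      simpa only [Category.assoc] using hiii
    · apply biprod.hom_ext' <;> apply biprod.hom_ext <;>
        simp [hii, hηη, hεε, hi]
    · dsimp
      rw [Category.id_comp]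
      apply biprod.hom_ext <;> simp [hii, hηη]
    · dsimp; simp
    · dsimp; simp
  · exact ⟨biprod.inr ≫ biprod.inr ≫ θ ≫ biprod.snd,
      biprod.inr ≫ inv θ ≫ biprod.snd ≫ biprod.fst,
      by simpa only [Category.assoc] using hi,
      by simpa only [Category.assoc] using hiii,
      by simpa only [Category.assoc] using hii⟩
end
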